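/- arXiv:2603.25547 — 3 statements merged into one kernel-verified Lean document; each statement's English description precedes it below -/
import Mathlib

section
/- Suppose G satisfies G(t,s) = sin(ω(t-s))/ω - (1/ω)∫_s^t sin(ω(t-τ)) q(τ) G(τ,s) dτ with ω > 0, q continuous and |q| integrable with tail Q(s) = ∫_s^∞ |q(τ)| dτ. Then G(t,s) = sin(ω(t-s))/ω - (1/ω²)∫_s^t sin(ω(t-τ)) sin(ω(τ-s)) q(τ) dτ + E(t,s), where |E(t,s)| ≤ e^{Q(s)/ω} Q(s)² / (2ω³) for all t ≥ s ≥ 0. -/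
open MeasureTheory Filter intervalIntegral

/-!
Write `P t = ∫_s^t |q|`. Bounding the kernel `sin` by `1` in the Volterra equation gives
`|G(t,s)| ≤ 1/ω + (1/ω) ∫_s^t |q| |G|`, so Grönwall's inequality yields `|G(t,s)| ≤ e^{P t/ω}/ω`.
Feeding this back into the equation once gives `|G(τ,s) - sin(ω(τ-s))/ω| ≤ e^{P t/ω} P τ / ω²`
for `τ ≤ t`, and feeding that in a second time bounds the error of the first Born approximation
by `(e^{P t/ω}/ω³) ∫_s^t |q| P = e^{P t/ω} (P t)² / (2ω³)`. Finally `P t ≤ Q s`.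
-/

lemma integral_mul_integral_eq_sq_div_two {f : ℝ → ℝ} (hf : Continuous f) (a b : ℝ) :
    ∫ x in a..b, f x * ∫ y in a..x, f y = (∫ x in a..b, f x) ^ 2 / 2 := by
  have hF : ∀ x, HasDerivAt (fun x => ∫ y in a..x, f y) (f x) x := fun x =>
    (hf.integral_hasStrictDerivAt a x).hasDerivAt
  rw [integral_eq_sub_of_hasDerivAt (f := fun x => (∫ y in a..x, f y) ^ 2 / 2)
    (f' := fun x => f x * ∫ y in a..x, f y)
    (fun x _ => (((hF x).fun_pow 2).div_const 2).congr_deriv (by ring))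
    ((hf.mul (continuous_primitive hf.intervalIntegrable a)).intervalIntegrable a b)]
  simp

theorem le_mul_exp_integral_of_le_add_integral {k u : ℝ → ℝ} {c s : ℝ}
    (hk : Continuous k) (hu : Continuous u) (hk0 : ∀ r, s ≤ r → 0 ≤ k r)
    (h : ∀ r, s ≤ r → u r ≤ c + ∫ τ in s..r, k τ * u τ) {t : ℝ} (hst : s ≤ t) :
    u t ≤ c * Real.exp (∫ τ in s..t, k τ) := by
  set w := fun r => ∫ τ in s..r, k τ * u τ
  set K := fun r => ∫ τ in s..r, k τ
  have hw : ∀ r, HasDerivAt w (k r * u r) r := fun r =>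
    ((hk.mul hu).integral_hasStrictDerivAt s r).hasDerivAt
  have hK : ∀ r, HasDerivAt K (k r) r := fun r => (hk.integral_hasStrictDerivAt s r).hasDerivAt
  set ψ := fun r => (c + w r) * Real.exp (-K r)
  have hψ : ∀ r, HasDerivAt ψ (k r * Real.exp (-K r) * (u r - (c + w r))) r := fun r =>
    (((hw r).const_add c).mul (hK r).fun_neg.exp).congr_deriv (by ring)
  have hψ_anti : AntitoneOn ψ (Set.Ici s) := by
    refine antitoneOn_of_hasDerivWithinAt_nonpos (convex_Ici s)
      (HasDerivAt.continuousOn fun r _ => hψ r) (fun r _ => (hψ r).hasDerivWithinAt) ?_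
    rw [interior_Ici]
    intro r hr
    exact mul_nonpos_of_nonneg_of_nonpos (mul_nonneg (hk0 r hr.le) (Real.exp_pos _).le)
      (sub_nonpos.2 (h r hr.le))
  have hψt : (c + w t) * Real.exp (-K t) ≤ c := by
    simpa [ψ, w, K] using hψ_anti Set.self_mem_Ici hst hst
  calc u t ≤ c + w t := h t hst
    _ = (c + w t) * Real.exp (-K t) * Real.exp (K t) := by
      rw [mul_assoc, ← Real.exp_add, neg_add_cancel, Real.exp_zero, mul_one]
    _ ≤ c * Real.exp (K t) := by gcongr

lemma abs_integral_sin_mul_le {ω s t : ℝ} {q f b : ℝ → ℝ} (hq : Continuous q)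
    (hb : Continuous b) (hst : s ≤ t) (hfb : ∀ τ ∈ Set.Icc s t, |f τ| ≤ b τ) :
    |∫ τ in s..t, Real.sin (ω * (t - τ)) * q τ * f τ| ≤ ∫ τ in s..t, |q τ| * b τ := by
  rw [← Real.norm_eq_abs]
  refine norm_integral_le_of_norm_le hst (ae_of_all _ fun τ hτ => ?_)
    (Continuous.intervalIntegrable (by fun_prop) s t)
  rw [Real.norm_eq_abs, abs_mul, abs_mul]
  calc |Real.sin (ω * (t - τ))| * |q τ| * |f τ| ≤ 1 * |q τ| * b τ := by
        gcongr
        · exact Real.abs_sin_le_one _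
        · exact hfb τ (Set.Ioc_subset_Icc_self hτ)
    _ = |q τ| * b τ := by rw [one_mul]

/-- The Volterra equation satisfied by `g = G(·, s)`. -/
def SolvesSineVolterra (ω : ℝ) (q g : ℝ → ℝ) (s : ℝ) : Prop :=
  ∀ t, s ≤ t →
    g t = Real.sin (ω * (t - s)) / ω - (1 / ω) * ∫ τ in s..t, Real.sin (ω * (t - τ)) * q τ * g τ

namespace SolvesSineVolterra

variable {ω s : ℝ} {q g : ℝ → ℝ}

lemma abs_le_inv_add_integral (h : SolvesSineVolterra ω q g s) (hω : 0 < ω)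
    (hq : Continuous q) (hg : Continuous g) {t : ℝ} (hst : s ≤ t) :
    |g t| ≤ 1 / ω + ∫ τ in s..t, |q τ| / ω * |g τ| := by
  have hI := abs_integral_sin_mul_le (ω := ω) hq hg.abs hst fun τ _ => le_rfl
  have hsin : |Real.sin (ω * (t - s)) / ω| ≤ 1 / ω := by
    rw [abs_div, abs_of_pos hω]
    gcongr
    exact Real.abs_sin_le_one _
  have hrw : ∫ τ in s..t, |q τ| / ω * |g τ| = 1 / ω * ∫ τ in s..t, |q τ| * |g τ| := by
    rw [← intervalIntegral.integral_const_mul]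
    congr 1 with τ
    ring
  rw [h t hst, hrw]
  refine (abs_sub _ _).trans (add_le_add hsin ?_)
  rw [abs_mul, abs_of_pos (one_div_pos.2 hω)]
  gcongr

lemma abs_le_exp (h : SolvesSineVolterra ω q g s) (hω : 0 < ω) (hq : Continuous q)
    (hg : Continuous g) {t : ℝ} (hst : s ≤ t) :
    |g t| ≤ Real.exp ((∫ τ in s..t, |q τ|) / ω) / ω := by
  have := le_mul_exp_integral_of_le_add_integral (hq.abs.div_const ω) hg.abs
    (fun r _ => by positivity) (fun r hr => h.abs_le_inv_add_integral hω hq hg hr) hst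
  rwa [intervalIntegral.integral_div, one_div_mul_eq_div] at this

lemma abs_sub_sin_le (h : SolvesSineVolterra ω q g s) (hω : 0 < ω) (hq : Continuous q)
    (hg : Continuous g) {r t : ℝ} (hsr : s ≤ r) (hrt : r ≤ t) :
    |g r - Real.sin (ω * (r - s)) / ω| ≤
      Real.exp ((∫ τ in s..t, |q τ|) / ω) / ω ^ 2 * ∫ τ in s..r, |q τ| := by
  have hgM : ∀ τ ∈ Set.Icc s r, |g τ| ≤ Real.exp ((∫ τ in s..t, |q τ|) / ω) / ω := by
    intro τ hτ
    refine (h.abs_le_exp hω hq hg hτ.1).trans ?_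
    gcongr
    exact integral_mono_interval le_rfl hτ.1 (hτ.2.trans hrt)
      (ae_of_all _ fun _ => abs_nonneg _) (hq.abs.intervalIntegrable s t)
  have hI := abs_integral_sin_mul_le (ω := ω) hq continuous_const hsr hgM
  rw [intervalIntegral.integral_mul_const] at hI
  have heq : g r - Real.sin (ω * (r - s)) / ω =
      -(1 / ω) * ∫ τ in s..r, Real.sin (ω * (r - τ)) * q τ * g τ := by
    rw [h r hsr]; ring
  rw [heq, abs_mul, abs_neg, abs_of_pos (one_div_pos.2 hω)]
  calc 1 / ω * |∫ τ in s..r, Real.sin (ω * (r - τ)) * q τ * g τ|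
      ≤ 1 / ω * ((∫ τ in s..r, |q τ|) * (Real.exp ((∫ τ in s..t, |q τ|) / ω) / ω)) := by gcongr
    _ = _ := by ring

theorem abs_sub_born_le (h : SolvesSineVolterra ω q g s) (hω : 0 < ω) (hq : Continuous q)
    (hg : Continuous g) {t : ℝ} (hst : s ≤ t) :
    |g t - (Real.sin (ω * (t - s)) / ω -
        (1 / ω ^ 2) * ∫ τ in s..t, Real.sin (ω * (t - τ)) * Real.sin (ω * (τ - s)) * q τ)| ≤
      Real.exp ((∫ τ in s..t, |q τ|) / ω) * (∫ τ in s..t, |q τ|) ^ 2 / (2 * ω ^ 3) := by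
  set P := ∫ τ in s..t, |q τ|
  have heq : g t - (Real.sin (ω * (t - s)) / ω -
        (1 / ω ^ 2) * ∫ τ in s..t, Real.sin (ω * (t - τ)) * Real.sin (ω * (τ - s)) * q τ) =
      -(1 / ω) * ∫ τ in s..t,
        Real.sin (ω * (t - τ)) * q τ * (g τ - Real.sin (ω * (τ - s)) / ω) := by
    have hsplit : ∫ τ in s..t,
          Real.sin (ω * (t - τ)) * q τ * (g τ - Real.sin (ω * (τ - s)) / ω) =
        (∫ τ in s..t, Real.sin (ω * (t - τ)) * q τ * g τ) -
          1 / ω * ∫ τ in s..t, Real.sin (ω * (t - τ)) * Real.sin (ω * (τ - s)) * q τ := by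
      rw [← intervalIntegral.integral_const_mul, ← intervalIntegral.integral_sub
        (Continuous.intervalIntegrable (by fun_prop) s t)
        (Continuous.intervalIntegrable (by fun_prop) s t)]
      congr 1 with τ
      ring
    rw [h t hst, hsplit]
    ring
  have hI := abs_integral_sin_mul_le (ω := ω)
    (b := fun τ => Real.exp (P / ω) / ω ^ 2 * ∫ σ in s..τ, |q σ|) hq
    (continuous_const.mul (continuous_primitive hq.abs.intervalIntegrable s))
    hst fun r hr => h.abs_sub_sin_le hω hq hg hr.1 hr.2
  have hsq : ∫ τ in s..t, |q τ| * (Real.exp (P / ω) / ω ^ 2 * ∫ σ in s..τ, |q σ|) =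
      Real.exp (P / ω) / ω ^ 2 * (P ^ 2 / 2) := by
    rw [← integral_mul_integral_eq_sq_div_two hq.abs, ← intervalIntegral.integral_const_mul]
    congr 1 with τ
    ring
  rw [hsq] at hI
  rw [heq, abs_mul, abs_neg, abs_of_pos (one_div_pos.2 hω)]
  calc 1 / ω * |∫ τ in s..t,
        Real.sin (ω * (t - τ)) * q τ * (g τ - Real.sin (ω * (τ - s)) / ω)|
      ≤ 1 / ω * (Real.exp (P / ω) / ω ^ 2 * (P ^ 2 / 2)) := by gcongr
    _ = Real.exp (P / ω) * P ^ 2 / (2 * ω ^ 3) := by field_simp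

end SolvesSineVolterra

theorem stmt_5 (ω : ℝ) (hω : 0 < ω) (q : ℝ → ℝ) (hq : Continuous q)
    (hqint : IntegrableOn (fun τ => |q τ|) (Set.Ici 0))
    (Q : ℝ → ℝ) (hQ : ∀ s, Q s = ∫ τ in Set.Ici s, |q τ|)
    (G : ℝ → ℝ → ℝ) (hG : Continuous fun pr : ℝ × ℝ => G pr.1 pr.2)
    (hVolt : ∀ s t, 0 ≤ s → s ≤ t →
      G t s = Real.sin (ω * (t - s)) / ω -
        (1/ω) * ∫ τ in s..t, Real.sin (ω * (t - τ)) * q τ * G τ s) :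
    ∀ s t, 0 ≤ s → s ≤ t →
      |G t s - (Real.sin (ω * (t - s)) / ω -
        (1/ω ^ 2) * ∫ τ in s..t,
          Real.sin (ω * (t - τ)) * Real.sin (ω * (τ - s)) * q τ)| ≤
      Real.exp (Q s / ω) * (Q s) ^ 2 / (2 * ω ^ 3) := by
  intro s t hs hst
  have hg : Continuous fun τ => G τ s := hG.comp (continuous_id.prodMk continuous_const)
  have hP_nonneg : 0 ≤ ∫ τ in s..t, |q τ| := integral_nonneg hst fun _ _ => abs_nonneg _
  have hP_le : ∫ τ in s..t, |q τ| ≤ Q s := by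
    rw [integral_of_le hst, hQ]
    exact setIntegral_mono_set (hqint.mono_set (Set.Ici_subset_Ici.2 hs))
      (ae_of_all _ fun _ => abs_nonneg _) (ae_of_all _ fun _ hx => hx.1.le)
  calc _ ≤ _ := SolvesSineVolterra.abs_sub_born_le (fun t ht => hVolt s t hs ht) hω hq hg hst
    _ ≤ _ := by gcongr
end

section
/- Let p be C¹, positive, decreasing on [0,∞), E(t,s) = exp(-(1/2)∫_s^t p(τ)dτ), and q(s) = -(1/4)p(s)² - (1/2)p'(s). Then ∫₀^t E(t,s)|q(s)| ds ≤ p(0) for all t ≥ 0. -/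
/-!
Since `∂ₛ E(t,s) = ½ p(s) E(t,s)` and `E(t,t) = 1`, the weight `½ p E(t,·)` has total mass
`1 - E(t,0) ≤ 1` on `[0,t]`. Splitting `|q| ≤ ¼ p² - ½ p'`, the first part is at most
`½ p(0) · ½ p E(t,·)`, contributing at most `½ p(0)`, and since `E ≤ 1` the second contributes at
most `∫₀ᵗ -½ p' = ½ (p(0) - p(t)) ≤ ½ p(0)`.
-/

open MeasureTheory Filter intervalIntegral

lemma mul_abs_neg_quarter_sq_sub_half_le {e a a₀ b : ℝ} (he₀ : 0 ≤ e) (he₁ : e ≤ 1)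
    (ha : 0 ≤ a) (ha₀ : a ≤ a₀) (hb : b ≤ 0) :
    e * |-(1/4) * a ^ 2 - (1/2) * b| ≤ a₀ / 2 * (a / 2 * e) - b / 2 := by
  have habs : |-(1/4) * a ^ 2 - (1/2) * b| ≤ (1/4) * a ^ 2 - (1/2) * b := by
    rw [abs_le]; constructor <;> nlinarith [sq_nonneg a]
  calc e * |-(1/4) * a ^ 2 - (1/2) * b|
      ≤ e * ((1/4) * a ^ 2 - (1/2) * b) := mul_le_mul_of_nonneg_left habs he₀
    _ ≤ a₀ / 2 * (a / 2 * e) - b / 2 := by nlinarith [mul_nonneg he₀ ha]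

section Kernel

variable {p : ℝ → ℝ} (t : ℝ)

lemma hasDerivAt_exp_neg_half_integral (hp : Continuous p) (s : ℝ) :
    HasDerivAt (fun s => Real.exp (-(1/2) * ∫ τ in s..t, p τ))
      (p s / 2 * Real.exp (-(1/2) * ∫ τ in s..t, p τ)) s := by
  have hint : HasDerivAt (fun s => ∫ τ in s..t, p τ) (-p s) s :=
    integral_hasDerivAt_left (hp.intervalIntegrable s t) (hp.stronglyMeasurableAtFilter _ _)
      hp.continuousAt
  convert (hint.const_mul (-(1/2))).exp using 1
  ring

lemma continuous_exp_neg_half_integral (hp : Continuous p) :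
    Continuous fun s => Real.exp (-(1/2) * ∫ τ in s..t, p τ) :=
  continuous_iff_continuousAt.2 fun s => (hasDerivAt_exp_neg_half_integral t hp s).continuousAt

lemma integral_half_mul_exp_neg_half_integral (hp : Continuous p) (a : ℝ) :
    ∫ s in a..t, p s / 2 * Real.exp (-(1/2) * ∫ τ in s..t, p τ) =
      1 - Real.exp (-(1/2) * ∫ τ in a..t, p τ) := by
  rw [integral_eq_sub_of_hasDerivAt (fun s _ => hasDerivAt_exp_neg_half_integral t hp s)
    (((hp.div_const 2).mul (continuous_exp_neg_half_integral t hp)).intervalIntegrable a t)]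
  simp

lemma exp_neg_half_integral_le_one {s : ℝ} (hst : s ≤ t) (hp : ∀ τ ∈ Set.Icc s t, 0 ≤ p τ) :
    Real.exp (-(1/2) * ∫ τ in s..t, p τ) ≤ 1 := by
  have : 0 ≤ ∫ τ in s..t, p τ := integral_nonneg hst hp
  rw [Real.exp_le_one_iff]
  linarith

end Kernel

theorem stmt_8 (p : ℝ → ℝ) (hp : ContDiff ℝ 1 p)
    (hpos : ∀ t, 0 ≤ t → 0 < p t)
    (hdec : ∀ t, 0 ≤ t → deriv p t < 0)
    (E : ℝ → ℝ → ℝ)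
    (hE : ∀ t s, E t s = Real.exp (-(1/2) * ∫ τ in s..t, p τ))
    (q : ℝ → ℝ) (hq : ∀ s, q s = -(1/4) * (p s) ^ 2 - (1/2) * deriv p s) :
    ∀ t, 0 ≤ t → ∫ s in (0:ℝ)..t, E t s * |q s| ≤ p 0 := by
  intro t ht
  have hpc : Continuous p := hp.continuous
  have hpd : Differentiable ℝ p := hp.differentiable one_ne_zero
  have hdc : Continuous (deriv p) := hp.continuous_deriv le_rfl
  have hE_eq : E t = fun s => Real.exp (-(1/2) * ∫ τ in s..t, p τ) := funext (hE t)
  have hEc : Continuous (E t) := hE_eq ▸ continuous_exp_neg_half_integral t hpc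
  have hqc : Continuous q := funext hq ▸ by fun_prop
  have hanti : AntitoneOn p (Set.Ici 0) :=
    antitoneOn_of_deriv_nonpos (convex_Ici 0) hpc.continuousOn hpd.differentiableOn
      fun s hs => (hdec s (interior_subset hs)).le
  have hbound : ∀ s ∈ Set.Icc 0 t,
      E t s * |q s| ≤ p 0 / 2 * (p s / 2 * E t s) - deriv p s / 2 := fun s hs => by
    rw [hq, hE]
    exact mul_abs_neg_quarter_sq_sub_half_le (Real.exp_pos _).le
      (exp_neg_half_integral_le_one t hs.2 fun τ hτ => (hpos τ (hs.1.trans hτ.1)).le)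
      (hpos s hs.1).le (hanti Set.self_mem_Ici hs.1 hs.1) (hdec s hs.1).le
  calc ∫ s in (0:ℝ)..t, E t s * |q s|
      ≤ ∫ s in (0:ℝ)..t, (p 0 / 2 * (p s / 2 * E t s) - deriv p s / 2) :=
        integral_mono_on ht ((hEc.mul hqc.abs).intervalIntegrable 0 t)
          (Continuous.intervalIntegrable (by fun_prop) 0 t) hbound
    _ = p 0 / 2 * (1 - E t 0) - (p t - p 0) / 2 := by
        rw [intervalIntegral.integral_sub (Continuous.intervalIntegrable (by fun_prop) 0 t)
          (Continuous.intervalIntegrable (by fun_prop) 0 t),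
          intervalIntegral.integral_const_mul, intervalIntegral.integral_div,
          integral_deriv_eq_sub (fun s _ => hpd s) (hdc.intervalIntegrable 0 t), hE_eq,
          integral_half_mul_exp_neg_half_integral t hpc]
    _ ≤ p 0 := by
        have hE0 : 0 < E t 0 := hE t 0 ▸ Real.exp_pos _
        nlinarith [hpos 0 le_rfl, hpos t ht]
end

section
/- Let ρ : [0,∞) → (0,∞) be differentiable and subexponential (ρ'(t)/ρ(t) → 0), let k : [0,∞) → ℝ satisfy |k(t)| ≤ C e^{-αt} for constants C, α > 0, and let z be continuous with z(t) = O(ρ(t)) as t → ∞. Then (k * z)(t) = ∫₀^t k(t-s) z(s) ds = O(ρ(t)) as t → ∞. -/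
open MeasureTheory Filter intervalIntegral Asymptotics

/-! Since `ρ' / ρ → 0`, for `ε = α / 2` the function `ρ u * e^{ε u}` is eventually increasing,
so `ρ s ≤ K e^{ε (t - s)} ρ t` for `0 ≤ s ≤ t` (compactness handles `s` in the initial segment).
The kernel's decay `e^{-α (t - s)}` beats this growth, and what remains is
`ρ t · ∫₀ᵗ e^{-(α - ε)(t - s)} ds ≤ ρ t / (α - ε)`. -/

section

open Set Real

theorem monotoneOn_mul_exp_of_neg_le_deriv {ρ : ℝ → ℝ} {ε T : ℝ} (hρ : Differentiable ℝ ρ)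
    (hρ' : ∀ u ∈ Ioi T, -(ε * ρ u) ≤ deriv ρ u) :
    MonotoneOn (fun u => ρ u * exp (ε * u)) (Ici T) := by
  refine monotoneOn_of_hasDerivWithinAt_nonneg
    (f' := fun u => (deriv ρ u + ε * ρ u) * exp (ε * u)) (convex_Ici T)
    (hρ.continuous.mul (by fun_prop)).continuousOn (fun u _ => ?_) (fun u hu => ?_)
  · have hderiv : HasDerivAt (fun u => ρ u * exp (ε * u))
        (deriv ρ u * exp (ε * u) + ρ u * (exp (ε * u) * (ε * 1))) u :=
      (hρ u).hasDerivAt.mul ((hasDerivAt_id u).const_mul ε).exp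
    exact (hderiv.congr_deriv (by ring)).hasDerivWithinAt
  · rw [interior_Ici] at hu
    have := hρ' u hu
    have := exp_pos (ε * u)
    nlinarith

theorem exists_le_mul_of_monotoneOn_Ici {g : ℝ → ℝ} {a T : ℝ} (hT : 0 < g T)
    (hcont : ContinuousOn g (Icc a T)) (hmono : MonotoneOn g (Ici T)) :
    ∃ K, ∀ t, T ≤ t → ∀ s ∈ Icc a t, g s ≤ K * g t := by
  obtain ⟨G, hG⟩ := isCompact_Icc.bddAbove_image hcont
  refine ⟨max 1 (G / g T), fun t ht s hs => ?_⟩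
  have hgt : g T ≤ g t := hmono self_mem_Ici ht ht
  rcases le_total s T with hsT | hTs
  · calc g s ≤ G := hG (mem_image_of_mem g ⟨hs.1, hsT⟩)
      _ = G / g T * g T := by field_simp
      _ ≤ max 1 (G / g T) * g t := by gcongr; exact le_max_right _ _
  · calc g s ≤ 1 * g t := by rw [one_mul]; exact hmono hTs (hTs.trans hs.2) hs.2
      _ ≤ max 1 (G / g T) * g t := by gcongr; exacts [hT.le.trans hgt, le_max_left _ _]

theorem exists_le_mul_exp_mul_of_tendsto_deriv_div {ρ : ℝ → ℝ} (hpos : ∀ t, 0 < ρ t)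
    (hρ : Differentiable ℝ ρ) (hsub : Tendsto (fun t => deriv ρ t / ρ t) atTop (nhds 0))
    {ε : ℝ} (hε : 0 < ε) :
    ∃ K, ∀ᶠ t in atTop, ∀ s ∈ Icc 0 t, ρ s ≤ K * exp (ε * (t - s)) * ρ t := by
  have hslow : ∀ᶠ u in atTop, -(ε * ρ u) ≤ deriv ρ u := by
    filter_upwards [hsub.eventually (Ioo_mem_nhds (neg_lt_zero.2 hε) hε)] with u hu
    have := (lt_div_iff₀ (hpos u)).1 hu.1
    linarith
  obtain ⟨T, hT⟩ := eventually_atTop.1 hslow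
  obtain ⟨K, hK⟩ := exists_le_mul_of_monotoneOn_Ici (g := fun u => ρ u * exp (ε * u)) (a := 0)
    (mul_pos (hpos T) (exp_pos (ε * T)))
    (hρ.continuous.mul (by fun_prop)).continuousOn
    (monotoneOn_mul_exp_of_neg_le_deriv hρ fun u hu => hT u (le_of_lt hu))
  refine ⟨K, ?_⟩
  filter_upwards [eventually_ge_atTop T] with t ht s hs
  have h := (le_div_iff₀ (exp_pos _)).2 (hK t ht s hs)
  rw [mul_sub, exp_sub]
  exact h.trans_eq (by ring)

theorem integral_exp_neg_mul_sub_le {β : ℝ} (hβ : 0 < β) (t : ℝ) :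
    ∫ s in (0:ℝ)..t, exp (-β * (t - s)) ≤ β⁻¹ := by
  rw [integral_comp_sub_left (fun u => exp (-β * u)),
    integral_comp_mul_left (fun u => exp u) (neg_ne_zero.2 hβ.ne'), integral_exp]
  simp only [sub_zero, sub_self, mul_zero, exp_zero, smul_eq_mul, inv_neg]
  have := exp_pos (-β * t)
  have := inv_pos.2 hβ
  nlinarith

theorem norm_integral_mul_sub_le_of_exp_bounds {k z : ℝ → ℝ} {C α B β t : ℝ} (hβα : β < α)
    (ht : 0 ≤ t) (hk : ∀ u, 0 ≤ u → |k u| ≤ C * exp (-α * u))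
    (hz : ∀ s ∈ Icc 0 t, |z s| ≤ B * exp (β * (t - s))) :
    ‖∫ s in (0:ℝ)..t, k (t - s) * z s‖ ≤ C * B * (α - β)⁻¹ := by
  have hCB : 0 ≤ C * B := by
    have hC : 0 ≤ C := by simpa using (abs_nonneg _).trans (hk 0 le_rfl)
    have hB : 0 ≤ B := by simpa using (abs_nonneg _).trans (hz t ⟨ht, le_rfl⟩)
    positivity
  have hpointwise : ∀ s ∈ Ioc 0 t,
      ‖k (t - s) * z s‖ ≤ C * B * exp (-(α - β) * (t - s)) := by
    intro s hs
    have hts : 0 ≤ t - s := sub_nonneg.2 hs.2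
    calc ‖k (t - s) * z s‖ = |k (t - s)| * |z s| := abs_mul _ _
      _ ≤ C * exp (-α * (t - s)) * (B * exp (β * (t - s))) :=
          mul_le_mul (hk _ hts) (hz s ⟨hs.1.le, hs.2⟩) (abs_nonneg _)
            ((abs_nonneg _).trans (hk _ hts))
      _ = C * B * exp (-(α - β) * (t - s)) := by
          rw [mul_mul_mul_comm, ← exp_add]; congr 2; ring
  calc ‖∫ s in (0:ℝ)..t, k (t - s) * z s‖
      ≤ ∫ s in (0:ℝ)..t, C * B * exp (-(α - β) * (t - s)) :=
        norm_integral_le_of_norm_le ht (Eventually.of_forall hpointwise)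
          (by apply Continuous.intervalIntegrable; fun_prop)
    _ = C * B * ∫ s in (0:ℝ)..t, exp (-(α - β) * (t - s)) := integral_const_mul _ _
    _ ≤ C * B * (α - β)⁻¹ :=
        mul_le_mul_of_nonneg_left (integral_exp_neg_mul_sub_le (sub_pos.2 hβα) t) hCB

end

theorem stmt_13_general (ρ : ℝ → ℝ) (hρpos : ∀ t, 0 < ρ t)
    (hρdiff : Differentiable ℝ ρ)
    (hsub : Tendsto (fun t => deriv ρ t / ρ t) atTop (nhds 0))
    (k : ℝ → ℝ) (C α : ℝ) (hα : 0 < α)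
    (hk : ∀ t, 0 ≤ t → |k t| ≤ C * Real.exp (-α * t))
    (z : ℝ → ℝ)
    (M : ℝ) (hM : ∀ t, 0 ≤ t → |z t| ≤ M * ρ t) :
    (fun t => ∫ s in (0:ℝ)..t, k (t - s) * z s) =O[atTop] ρ := by
  have hM0 : 0 ≤ M := nonneg_of_mul_nonneg_left ((abs_nonneg _).trans (hM 0 le_rfl)) (hρpos 0)
  obtain ⟨K, hK⟩ :=
    exists_le_mul_exp_mul_of_tendsto_deriv_div hρpos hρdiff hsub (half_pos hα)
  refine IsBigO.of_bound (C * M * K * (α - α / 2)⁻¹) ?_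
  filter_upwards [hK, eventually_ge_atTop 0] with t hKt ht
  have hz : ∀ s ∈ Set.Icc 0 t, |z s| ≤ M * K * ρ t * Real.exp (α / 2 * (t - s)) := fun s hs =>
    calc |z s| ≤ M * ρ s := hM s hs.1
      _ ≤ M * (K * Real.exp (α / 2 * (t - s)) * ρ t) := mul_le_mul_of_nonneg_left (hKt s hs) hM0
      _ = M * K * ρ t * Real.exp (α / 2 * (t - s)) := by ring
  calc _ ≤ C * (M * K * ρ t) * (α - α / 2)⁻¹ :=
        norm_integral_mul_sub_le_of_exp_bounds (half_lt_self hα) ht hk hz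
    _ = C * M * K * (α - α / 2)⁻¹ * ‖ρ t‖ := by
        rw [Real.norm_of_nonneg (hρpos t).le]; ring

theorem stmt_13 (ρ : ℝ → ℝ) (hρpos : ∀ t, 0 < ρ t)
    (hρdiff : Differentiable ℝ ρ)
    (hsub : Tendsto (fun t => deriv ρ t / ρ t) atTop (nhds 0))
    (k : ℝ → ℝ) (C α : ℝ) (hC : 0 < C) (hα : 0 < α)
    (hk : ∀ t, 0 ≤ t → |k t| ≤ C * Real.exp (-α * t))
    (z : ℝ → ℝ) (hz : Continuous z)
    (M : ℝ) (hM : ∀ t, 0 ≤ t → |z t| ≤ M * ρ t) :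
    (fun t => ∫ s in (0:ℝ)..t, k (t - s) * z s) =O[atTop] ρ :=
  stmt_13_general ρ hρpos hρdiff hsub k C α hα hk z M hM
end
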